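/- arXiv:2009.02712 — 2 statements merged into one kernel-verified Lean document; each statement's English description precedes it below -/
import Mathlib

section
/- Let λ > 0 and t₀ ≥ 2. Then for every ρ ∈ (0, 1), the function f₁(ρ) = 1/(λ t₀^ρ Γ(1−ρ)) is differentiable at ρ and its derivative satisfies f₁'(ρ) ≤ −1/(λ t₀^ρ). -/
open Set Real

/-!
Writing `ψ = Γ'/Γ`, one has `f₁' = (ψ(1 - ρ) - log t₀) f₁`, so the bound amounts to
`ψ(x) + Γ(x) ≤ log t₀` for `x = 1 - ρ ∈ (0, 1)`. The recurrences `ψ(x) = ψ(x + 1) - 1/x` and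
`Γ(x) = Γ(x + 1)/x` turn the left side into `ψ(x + 1) + (Γ(x + 1) - 1)/x`. Convexity of `log Γ`
(tangent below the secant over `[x + 1, x + 2]`) gives `ψ(x + 1) ≤ log (x + 1) ≤ log 2`, and
convexity of `Γ` between `Γ 1 = Γ 2 = 1` gives `Γ(x + 1) ≤ 1`.
-/

namespace Real

theorem differentiableAt_Gamma_of_pos {x : ℝ} (hx : 0 < x) : DifferentiableAt ℝ Gamma x :=
  differentiableOn_Gamma_Ioi.differentiableAt (Ioi_mem_nhds hx)

theorem Gamma_add_one_le_one {x : ℝ} (hx₀ : 0 ≤ x) (hx₁ : x ≤ 1) : Gamma (x + 1) ≤ 1 := by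
  have h := convexOn_Gamma.2 (mem_Ioi.mpr one_pos) (mem_Ioi.mpr two_pos)
    (by linarith : (0 : ℝ) ≤ 1 - x) hx₀ (by ring : (1 - x) + x = 1)
  simp only [smul_eq_mul, Gamma_one, Gamma_two, mul_one] at h
  calc Gamma (x + 1) = Gamma ((1 - x) + x * 2) := by ring_nf
    _ ≤ 1 := by linarith

theorem Gamma_le_inv {x : ℝ} (hx₀ : 0 < x) (hx₁ : x ≤ 1) : Gamma x ≤ x⁻¹ := by
  have h := Gamma_add_one_le_one hx₀.le hx₁
  rw [Gamma_add_one hx₀.ne'] at h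
  rw [← one_div, le_div_iff₀ hx₀]
  linarith

theorem logDeriv_Gamma_add_one {x : ℝ} (hx : 0 < x) :
    logDeriv Gamma (x + 1) = logDeriv Gamma x + x⁻¹ := by
  have hshift : logDeriv (Gamma ∘ (· + 1)) x = logDeriv Gamma (x + 1) := by
    rw [logDeriv_comp (g := (· + 1)) (differentiableAt_Gamma_of_pos (by linarith))
      (differentiableAt_id.add_const 1), deriv_add_const, deriv_id'', mul_one]
  have hfun : Gamma ∘ (· + 1) =ᶠ[nhds x] fun y => y * Gamma y := by
    filter_upwards [Ioi_mem_nhds hx] with y hy using Gamma_add_one (ne_of_gt hy)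
  rw [← hshift, (logDeriv_congr_nhds hfun).eq_of_nhds,
    logDeriv_mul (f := fun y => y) x hx.ne' (Gamma_pos_of_pos hx).ne' differentiableAt_fun_id
      (differentiableAt_Gamma_of_pos hx),
    logDeriv_id', one_div, add_comm]

theorem logDeriv_Gamma_le_log {x : ℝ} (hx : 0 < x) : logDeriv Gamma x ≤ log x := by
  have hΓ := differentiableAt_Gamma_of_pos hx
  have hslope := convexOn_log_Gamma.deriv_le_slope (mem_Ioi.mpr hx)
    (mem_Ioi.mpr (by linarith : 0 < x + 1)) (lt_add_one x) (hΓ.log (Gamma_pos_of_pos hx).ne')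
  rwa [slope_def_field, add_sub_cancel_left, div_one, Function.comp_apply, Function.comp_apply,
    Gamma_add_one hx.ne', log_mul hx.ne' (Gamma_pos_of_pos hx).ne', add_sub_cancel_right,
    Function.comp_def, deriv.log hΓ (Gamma_pos_of_pos hx).ne'] at hslope

theorem logDeriv_Gamma_add_Gamma_le_log_two {x : ℝ} (hx₀ : 0 < x) (hx₁ : x ≤ 1) :
    logDeriv Gamma x + Gamma x ≤ log 2 := by
  have hψ : logDeriv Gamma x ≤ log (x + 1) - x⁻¹ := by
    linarith [logDeriv_Gamma_add_one hx₀, logDeriv_Gamma_le_log (by linarith : 0 < x + 1)]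
  have hΓ := Gamma_le_inv hx₀ hx₁
  have hlog : log (x + 1) ≤ log 2 := log_le_log (by linarith) (by linarith)
  linarith

theorem hasDerivAt_one_div_mul_rpow_mul_Gamma_one_sub {lam t ρ : ℝ} (hlam : lam ≠ 0)
    (ht : 0 < t) (hρ : ρ < 1) :
    HasDerivAt (fun ρ => 1 / (lam * t ^ ρ * Gamma (1 - ρ)))
      ((logDeriv Gamma (1 - ρ) - log t) / (lam * t ^ ρ * Gamma (1 - ρ))) ρ := by
  have hx : 0 < 1 - ρ := by linarith
  have hΓ : HasDerivAt (fun ρ => Gamma (1 - ρ)) (deriv Gamma (1 - ρ) * -1) ρ :=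
    (differentiableAt_Gamma_of_pos hx).hasDerivAt.comp ρ ((hasDerivAt_id ρ).const_sub 1)
  have hden : HasDerivAt (fun ρ => lam * t ^ ρ * Gamma (1 - ρ))
      (lam * (t ^ ρ * log t) * Gamma (1 - ρ) + lam * t ^ ρ * (deriv Gamma (1 - ρ) * -1)) ρ :=
    ((hasStrictDerivAt_const_rpow ht ρ).hasDerivAt.const_mul lam).mul hΓ
  have hG := (Gamma_pos_of_pos hx).ne'
  have htρ := (rpow_pos_of_pos ht ρ).ne'
  simp only [one_div]
  refine (hden.inv (by simp [*])).congr_deriv ?_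
  rw [logDeriv_apply]
  field_simp
  ring

end Real

/-- For `λ > 0` and `t₀ ≥ 2`, the function `f₁(ρ) = 1/(λ t₀^ρ Γ(1−ρ))` is differentiable
at every `ρ ∈ (0, 1)` with `f₁'(ρ) ≤ −1/(λ t₀^ρ)`. -/
theorem stmt8 (lam t₀ : ℝ) (hlam : 0 < lam) (ht₀ : 2 ≤ t₀) :
    ∀ ρ ∈ Set.Ioo (0 : ℝ) 1,
      DifferentiableAt ℝ (fun ρ : ℝ => 1 / (lam * t₀ ^ ρ * Real.Gamma (1 - ρ))) ρ ∧
      deriv (fun ρ : ℝ => 1 / (lam * t₀ ^ ρ * Real.Gamma (1 - ρ))) ρ ≤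
        -1 / (lam * t₀ ^ ρ) := by
  rintro ρ ⟨hρ₀, hρ₁⟩
  have hf := hasDerivAt_one_div_mul_rpow_mul_Gamma_one_sub hlam.ne' (by linarith : 0 < t₀) hρ₁
  refine ⟨hf.differentiableAt, ?_⟩
  have hψ := logDeriv_Gamma_add_Gamma_le_log_two (x := 1 - ρ) (by linarith) (by linarith)
  have hlog : log 2 ≤ log t₀ := log_le_log two_pos ht₀
  have hG : 0 < Gamma (1 - ρ) := Gamma_pos_of_pos (by linarith)
  calc deriv _ ρ = (logDeriv Gamma (1 - ρ) - log t₀) / (lam * t₀ ^ ρ * Gamma (1 - ρ)) := hf.deriv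
    _ ≤ -Gamma (1 - ρ) / (lam * t₀ ^ ρ * Gamma (1 - ρ)) := by gcongr; linarith
    _ = -1 / (lam * t₀ ^ ρ) := by field_simp
end

section
/- Let ρ ∈ (0, 1), σ₀ ∈ (0, 1), t₀ > 1, and let λ₁ > 1 satisfy λ₁^{σ₀} ≥ 5 Γ(1−ρ). Then for every σ ∈ [σ₀, 1) the following two-sided estimate holds: E_ρ(−λ₁ t₀^ρ) < E_ρ(−λ₁^σ t₀^ρ) < E_ρ(−t₀^ρ). -/
/-!
For `0 < ρ ≤ 1` the function `E_ρ` is strictly increasing on all of `ℝ`. Termwise,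
`E_ρ' = E_{ρ,ρ} / ρ` for the two-parameter function `E_{ρ,β}(z) = ∑ z^k / Γ(ρk + β)`, so it
suffices that `E_{ρ,ρ} > 0`, which is clear on `[0, ∞)`.

On the negative axis, `v(t) = t^{ρ-1} E_{ρ,ρ}(-t^ρ)` solves the Abel equation
`∫₀ᵗ (t-s)^{ρ-1} v(s) ds = t^{ρ-1} - Γ(ρ) v(t)` (termwise, by the beta integral). Suppose `τ` is a
first zero of `v`, and let `θ` maximise `v` on a short interval `[τ - δ, τ]`. The rescaling
`(τ-s)^{ρ-1} ≤ (τ/θ)^{ρ-1} (θ-s)^{ρ-1}` for `s < θ` bounds the part over `(0, θ)` of the integral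
at `τ` by the integral at `θ`, and the equation then forces
`Γ(ρ) v(θ) (τ/θ)^{ρ-1} ≤ v(θ) (τ-θ)^ρ / ρ`; for `δ` small this contradicts `v(θ) > 0`.
-/

open Set Real

/-- The Mittag-Leffler function `E_ρ(z) = ∑_{k=0}^∞ z^k / Γ(ρk + 1)`. -/
noncomputable def mittagLeffler (ρ z : ℝ) : ℝ := ∑' k : ℕ, z ^ k / Real.Gamma (ρ * k + 1)

open Filter

namespace Real

/-- Log-convexity of `Γ` between `x + ρ` and `x + ρ + 1`, evaluated at `x + 1`. -/
theorem mul_Gamma_le_Gamma_add_mul_rpow {ρ x : ℝ} (hρ : 0 ≤ ρ) (hρ1 : ρ ≤ 1) (hx : 0 < x) :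
    x * Gamma x ≤ Gamma (x + ρ) * (x + ρ) ^ (1 - ρ) := by
  have hxρ : 0 < x + ρ := by linarith
  have hΓ : 0 < Gamma (x + ρ) := Gamma_pos_of_pos hxρ
  have hconv := convexOn_log_Gamma.2 (mem_Ioi.2 hxρ) (mem_Ioi.2 (by linarith : 0 < x + ρ + 1))
    hρ (sub_nonneg.2 hρ1) (add_sub_cancel ρ 1)
  have harg : ρ • (x + ρ) + (1 - ρ) • (x + ρ + 1) = x + 1 := by simp only [smul_eq_mul]; ring
  rw [harg] at hconv
  simp only [Function.comp, smul_eq_mul, Gamma_add_one hx.ne', Gamma_add_one hxρ.ne',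
    log_mul hxρ.ne' hΓ.ne'] at hconv
  rw [← log_le_log_iff (by have := Gamma_pos_of_pos hx; positivity) (by positivity),
    log_mul hΓ.ne' (by positivity), log_rpow hxρ]
  linarith

theorem rpow_mul_Gamma_le_two_mul_Gamma_add {ρ x : ℝ} (hρ : 0 < ρ) (hρ1 : ρ ≤ 1) (hx : ρ ≤ x) :
    x ^ ρ * Gamma x ≤ 2 * Gamma (x + ρ) := by
  have hx0 : 0 < x := hρ.trans_le hx
  have hΓ := (Gamma_pos_of_pos (by linarith : 0 < x + ρ)).le
  have hpow : 0 < x ^ (1 - ρ) := rpow_pos_of_pos hx0 _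
  have htwo : (2 : ℝ) ^ (1 - ρ) ≤ 2 := by
    simpa using rpow_le_rpow_of_exponent_le (by norm_num : (1 : ℝ) ≤ 2) (by linarith : 1 - ρ ≤ 1)
  refine le_of_mul_le_mul_right ?_ hpow
  calc x ^ ρ * Gamma x * x ^ (1 - ρ) = x * Gamma x := by
        rw [mul_right_comm, ← rpow_add hx0, add_sub_cancel, rpow_one]
    _ ≤ Gamma (x + ρ) * (x + ρ) ^ (1 - ρ) := mul_Gamma_le_Gamma_add_mul_rpow hρ.le hρ1 hx0
    _ ≤ Gamma (x + ρ) * (2 ^ (1 - ρ) * x ^ (1 - ρ)) := by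
        rw [← mul_rpow zero_le_two hx0.le]
        gcongr
        linarith
    _ ≤ 2 * Gamma (x + ρ) * x ^ (1 - ρ) := by
        rw [mul_left_comm, mul_assoc]
        gcongr

end Real

theorem summable_pow_div_Gamma {ρ β : ℝ} (hρ : 0 < ρ) (hρ1 : ρ ≤ 1) (hβ : 0 < β) (z : ℝ) :
    Summable fun k : ℕ => z ^ k / Gamma (ρ * k + β) := by
  have hG : ∀ x, 0 < x → ‖Gamma x‖ = Gamma x := fun x hx => norm_of_nonneg (Gamma_pos_of_pos hx).le
  have harg : Tendsto (fun k : ℕ => ρ * k + β) atTop atTop :=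
    tendsto_atTop_add_const_right _ _ (tendsto_natCast_atTop_atTop.const_mul_atTop hρ)
  refine .of_norm (summable_of_ratio_norm_eventually_le (r := 1 / 2) (by norm_num) ?_)
  filter_upwards [harg.eventually_ge_atTop ρ,
    ((tendsto_rpow_atTop hρ).comp harg).eventually_ge_atTop (4 * |z|)] with k hkρ hkz
  set x := ρ * k + β
  have hx : 0 < x := hρ.trans_le hkρ
  have hΓ := Real.rpow_mul_Gamma_le_two_mul_Gamma_add hρ hρ1 hkρ
  have hΓx := Gamma_pos_of_pos hx
  have hΓxρ := Gamma_pos_of_pos (by linarith : 0 < x + ρ)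
  have hsucc : ρ * ((k + 1 : ℕ) : ℝ) + β = x + ρ := by push_cast; ring
  simp only [norm_div, norm_pow, norm_mul, Real.norm_eq_abs, abs_abs, hsucc, hG _ hx,
    hG _ (by linarith : 0 < x + ρ), pow_succ]
  rw [div_le_iff₀ hΓxρ]
  have hratio : |z| * Gamma x ≤ Gamma (x + ρ) / 2 := by
    simp only [Function.comp] at hkz
    linarith [mul_le_mul_of_nonneg_right hkz hΓx.le]
  calc |z| ^ k * |z| = |z| ^ k / Gamma x * (|z| * Gamma x) := by field_simp
    _ ≤ |z| ^ k / Gamma x * (Gamma (x + ρ) / 2) := by gcongr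
    _ = 1 / 2 * (|z| ^ k / Gamma x) * Gamma (x + ρ) := by ring

noncomputable def mittagLeffler₂ (ρ β z : ℝ) : ℝ := ∑' k : ℕ, z ^ k / Gamma (ρ * k + β)

section MittagLeffler

variable {ρ β : ℝ}

theorem hasSum_mittagLeffler₂ (hρ : 0 < ρ) (hρ1 : ρ ≤ 1) (hβ : 0 < β) (z : ℝ) :
    HasSum (fun k : ℕ => z ^ k / Gamma (ρ * k + β)) (mittagLeffler₂ ρ β z) :=
  (summable_pow_div_Gamma hρ hρ1 hβ z).hasSum

theorem hasDerivAt_mittagLeffler₂ (hρ : 0 < ρ) (hρ1 : ρ ≤ 1) (hβ : 0 < β) (x : ℝ) :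
    HasDerivAt (mittagLeffler₂ ρ β) (∑' k : ℕ, k * x ^ (k - 1) / Gamma (ρ * k + β)) x := by
  set R := |x| + 1
  have hR : 1 ≤ R := le_add_of_nonneg_left (abs_nonneg x)
  have hx : x ∈ Ioo (-R) R := by
    simp only [mem_Ioo, R]; constructor <;> linarith [neg_abs_le x, le_abs_self x]
  refine hasDerivAt_tsum_of_isPreconnected (g := fun (k : ℕ) y => y ^ k / Gamma (ρ * k + β))
    (g' := fun (k : ℕ) y => k * y ^ (k - 1) / Gamma (ρ * k + β))
    (u := fun (k : ℕ) => (2 * R) ^ k / Gamma (ρ * k + β)) (summable_pow_div_Gamma hρ hρ1 hβ _)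
    isOpen_Ioo isPreconnected_Ioo (fun k y _ => (hasDerivAt_pow k y).div_const _)
    (fun k y hy => ?_) hx (summable_pow_div_Gamma hρ hρ1 hβ x) hx
  have hΓ := (Gamma_pos_of_pos (by positivity : 0 < ρ * k + β)).le
  have hyR : |y| ≤ R := (abs_lt.2 (mem_Ioo.1 hy)).le
  rw [norm_div, norm_mul, norm_pow, Real.norm_natCast, norm_of_nonneg hΓ, mul_pow]
  refine div_le_div_of_nonneg_right ?_ hΓ
  calc (k : ℝ) * ‖y‖ ^ (k - 1) ≤ 2 ^ k * R ^ (k - 1) := by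
        gcongr
        · exact_mod_cast (Nat.lt_two_pow_self).le
        · exact hyR
    _ ≤ 2 ^ k * R ^ k := by gcongr; exact k.sub_le 1

theorem continuous_mittagLeffler₂ (hρ : 0 < ρ) (hρ1 : ρ ≤ 1) (hβ : 0 < β) :
    Continuous (mittagLeffler₂ ρ β) :=
  continuous_iff_continuousAt.2 fun x => (hasDerivAt_mittagLeffler₂ hρ hρ1 hβ x).continuousAt

theorem mittagLeffler₂_pos_of_nonneg (hρ : 0 < ρ) (hρ1 : ρ ≤ 1) (hβ : 0 < β) {x : ℝ}
    (hx : 0 ≤ x) : 0 < mittagLeffler₂ ρ β x :=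
  (summable_pow_div_Gamma hρ hρ1 hβ x).tsum_pos
    (fun k => div_nonneg (pow_nonneg hx k) (Gamma_pos_of_pos (by positivity)).le) 0
    (by simpa using Gamma_pos_of_pos hβ)

end MittagLeffler

section AbelKernel

open MeasureTheory intervalIntegral

theorem intervalIntegrable_sub_rpow {r : ℝ} (hr : -1 < r) (c a b : ℝ) :
    IntervalIntegrable (fun s => (c - s) ^ r) volume a b := by
  simpa using (intervalIntegrable_rpow' hr (a := c - a) (b := c - b)).comp_sub_left c

theorem integral_sub_rpow {r : ℝ} (hr : -1 < r) (a b : ℝ) :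
    ∫ s in a..b, (b - s) ^ r = (b - a) ^ (r + 1) / (r + 1) := by
  rw [integral_comp_sub_left (fun s => s ^ r), sub_self,
    integral_rpow (Or.inl hr), zero_rpow (by linarith), sub_zero]

theorem intervalIntegrable_rpow_mul_sub_rpow {a b t : ℝ} (ha : 0 < a) (hb : 0 < b) (ht : 0 < t) :
    IntervalIntegrable (fun s => s ^ (a - 1) * (t - s) ^ (b - 1)) volume 0 t := by
  have hleft : ContinuousOn (fun s => (t - s) ^ (b - 1)) (uIcc 0 (t / 2)) := fun s hs => by
    rw [uIcc_of_le (by linarith)] at hs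
    exact ((continuousAt_const.sub continuousAt_id).rpow_const
      (Or.inl (show t - s ≠ 0 by linarith [hs.2]))).continuousWithinAt
  have hright : ContinuousOn (fun s => s ^ (a - 1)) (uIcc (t / 2) t) := fun s hs => by
    rw [uIcc_of_le (by linarith)] at hs
    exact (continuousAt_id.rpow_const (Or.inl (show s ≠ 0 by linarith [hs.1]))).continuousWithinAt
  exact ((intervalIntegrable_rpow' (by linarith)).mul_continuousOn hleft).trans
    ((intervalIntegrable_sub_rpow (by linarith) t _ _).continuousOn_mul hright)

theorem integral_rpow_mul_sub_rpow {a b t : ℝ} (ha : 0 < a) (hb : 0 < b) (ht : 0 < t) :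
    ∫ s in 0..t, s ^ (a - 1) * (t - s) ^ (b - 1) =
      Gamma a * Gamma b / Gamma (a + b) * t ^ (a + b - 1) := by
  have hβ := Complex.betaIntegral_scaled a b ht
  rw [Complex.betaIntegral_eq_Gamma_mul_div _ _ (by simpa) (by simpa)] at hβ
  apply Complex.ofReal_injective
  rw [← integral_ofReal, integral_congr (g := fun s : ℝ => (s : ℂ) ^ ((a : ℂ) - 1) *
    ((t : ℂ) - s) ^ ((b : ℂ) - 1)) fun s hs => ?_, hβ]
  · rw [← Complex.ofReal_add, Complex.Gamma_ofReal, Complex.Gamma_ofReal, Complex.Gamma_ofReal]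
    push_cast [Complex.ofReal_cpow ht.le]
    ring
  · rw [uIcc_of_le ht.le] at hs
    push_cast [Complex.ofReal_cpow hs.1, Complex.ofReal_cpow (sub_nonneg.2 hs.2)]
    rfl

end AbelKernel

section Volterra

open MeasureTheory intervalIntegral

variable {ρ : ℝ}

theorem rpow_sub_one_mul_rpow_pow {s : ℝ} (hs : 0 < s) (a ρ : ℝ) (k : ℕ) :
    s ^ (a - 1) * (s ^ ρ) ^ k = s ^ (ρ * k + a - 1) := by
  rw [← rpow_natCast, ← rpow_mul hs.le, ← rpow_add hs]
  ring_nf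

theorem integral_sub_rpow_mul_rpow_mul_neg_rpow_pow (hρ : 0 < ρ) {t : ℝ} (ht : 0 < t) (k : ℕ) :
    ∫ s in 0..t, (t - s) ^ (ρ - 1) * (s ^ (ρ - 1) * ((-s ^ ρ) ^ k / Gamma (ρ * k + ρ))) =
      -Gamma ρ * t ^ (ρ - 1) * ((-t ^ ρ) ^ (k + 1) / Gamma (ρ * (k + 1 : ℕ) + ρ)) := by
  have hΓ : 0 < Gamma (ρ * k + ρ) := Gamma_pos_of_pos (by positivity)
  calc _ = ∫ s in 0..t, (-1) ^ k / Gamma (ρ * k + ρ) *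
        (s ^ ((ρ * k + ρ) - 1) * (t - s) ^ (ρ - 1)) := by
        refine integral_congr_ae (ae_of_all _ fun s hs => ?_)
        rw [uIoc_of_le ht.le] at hs
        rw [← rpow_sub_one_mul_rpow_pow hs.1, neg_pow (s ^ ρ)]
        ring
    _ = (-1) ^ k / Gamma (ρ * k + ρ) *
        (Gamma (ρ * k + ρ) * Gamma ρ / Gamma (ρ * k + ρ + ρ) * t ^ (ρ * k + ρ + ρ - 1)) := by
        rw [intervalIntegral.integral_const_mul,
          integral_rpow_mul_sub_rpow (by positivity) hρ ht]
    _ = _ := by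
        have hpow : t ^ (ρ * k + ρ + ρ - 1) = t ^ (ρ - 1) * (t ^ ρ) ^ (k + 1) := by
          rw [rpow_sub_one_mul_rpow_pow ht]; push_cast; ring_nf
        rw [hpow, neg_pow (t ^ ρ), pow_succ,
          show ρ * ((k + 1 : ℕ) : ℝ) + ρ = ρ * k + ρ + ρ by push_cast; ring]
        field_simp [hΓ.ne']
        ring

theorem hasSum_integral_sub_rpow_mul_rpow_mul_neg_rpow_pow (hρ : 0 < ρ) (hρ1 : ρ ≤ 1) {t : ℝ}
    (ht : 0 < t) :
    HasSum (fun k : ℕ => ∫ s in 0..t,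
        (t - s) ^ (ρ - 1) * (s ^ (ρ - 1) * ((-s ^ ρ) ^ k / Gamma (ρ * k + ρ))))
      (∫ s in 0..t, (t - s) ^ (ρ - 1) * (s ^ (ρ - 1) * mittagLeffler₂ ρ ρ (-s ^ ρ))) := by
  refine hasSum_integral_of_dominated_convergence
    (fun k s => s ^ (ρ - 1) * (t - s) ^ (ρ - 1) * ((t ^ ρ) ^ k / Gamma (ρ * k + ρ)))
    (fun k => (Measurable.aestronglyMeasurable (by fun_prop)))
    (fun k => ae_of_all _ fun s hs => ?_)
    (ae_of_all _ fun s _ => (summable_pow_div_Gamma hρ hρ1 hρ _).mul_left _) ?_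
    (ae_of_all _ fun s _ => ((hasSum_mittagLeffler₂ hρ hρ1 hρ _).mul_left _).mul_left _)
  · obtain ⟨hs0, hst⟩ : 0 < s ∧ s ≤ t := by rwa [uIoc_of_le ht.le] at hs
    have hs1 := rpow_nonneg hs0.le (ρ - 1)
    have hts1 := rpow_nonneg (sub_nonneg.2 hst) (ρ - 1)
    simp only [norm_mul, norm_div, norm_pow, norm_neg, norm_of_nonneg hs1, norm_of_nonneg hts1,
      norm_of_nonneg (rpow_nonneg hs0.le ρ),
      norm_of_nonneg (Gamma_pos_of_pos (by positivity : 0 < ρ * k + ρ)).le]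
    rw [mul_left_comm, ← mul_assoc]
    gcongr
  · simp_rw [tsum_mul_left]
    exact (intervalIntegrable_rpow_mul_sub_rpow hρ hρ ht).mul_const (mittagLeffler₂ ρ ρ (t ^ ρ))

theorem integral_sub_rpow_mul_mittagLeffler₂ (hρ : 0 < ρ) (hρ1 : ρ ≤ 1) {t : ℝ} (ht : 0 < t) :
    ∫ s in 0..t, (t - s) ^ (ρ - 1) * (s ^ (ρ - 1) * mittagLeffler₂ ρ ρ (-s ^ ρ)) =
      t ^ (ρ - 1) - Gamma ρ * (t ^ (ρ - 1) * mittagLeffler₂ ρ ρ (-t ^ ρ)) := by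
  have htail := ((hasSum_nat_add_iff' 1).2 (hasSum_mittagLeffler₂ hρ hρ1 hρ (-t ^ ρ))).mul_left
    (-Gamma ρ * t ^ (ρ - 1))
  rw [Finset.sum_range_one] at htail
  have hval : t ^ (ρ - 1) - Gamma ρ * (t ^ (ρ - 1) * mittagLeffler₂ ρ ρ (-t ^ ρ)) =
      -Gamma ρ * t ^ (ρ - 1) *
        (mittagLeffler₂ ρ ρ (-t ^ ρ) - (-t ^ ρ) ^ 0 / Gamma (ρ * ((0 : ℕ) : ℝ) + ρ)) := by
    field_simp [(Gamma_pos_of_pos hρ).ne']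
    simp
    ring
  rw [hval]
  refine (hasSum_integral_sub_rpow_mul_rpow_mul_neg_rpow_pow hρ hρ1 ht).unique ?_
  rw [funext (integral_sub_rpow_mul_rpow_mul_neg_rpow_pow hρ ht)]
  exact htail

end Volterra

section AbelComparison

open MeasureTheory intervalIntegral

variable {ρ : ℝ} {v : ℝ → ℝ}

theorem integral_sub_rpow_mul_le_div_rpow_mul {θ τ : ℝ} (hρ1 : ρ ≤ 1) (hθ : 0 < θ) (hθτ : θ ≤ τ)
    (hv : ∀ s ∈ Ioo 0 θ, 0 ≤ v s)
    (hτint : IntervalIntegrable (fun s => (τ - s) ^ (ρ - 1) * v s) volume 0 θ)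
    (hθint : IntervalIntegrable (fun s => (θ - s) ^ (ρ - 1) * v s) volume 0 θ) :
    ∫ s in 0..θ, (τ - s) ^ (ρ - 1) * v s ≤
      (τ / θ) ^ (ρ - 1) * ∫ s in 0..θ, (θ - s) ^ (ρ - 1) * v s := by
  rw [← intervalIntegral.integral_const_mul]
  refine integral_mono_on_of_le_Ioo hθ.le hτint (hθint.const_mul _) fun s hs => ?_
  have hkernel : (τ - s) ^ (ρ - 1) ≤ (τ / θ) ^ (ρ - 1) * (θ - s) ^ (ρ - 1) := by
    have hθs : 0 < θ - s := sub_pos.2 hs.2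
    have hτθ : 0 < τ / θ := div_pos (hθ.trans_le hθτ) hθ
    rw [← mul_rpow hτθ.le hθs.le]
    refine rpow_le_rpow_of_nonpos (mul_pos hτθ hθs) ?_ (by linarith)
    rw [div_mul_eq_mul_div, div_le_iff₀ hθ]
    nlinarith [hs.1]
  calc (τ - s) ^ (ρ - 1) * v s ≤ (τ / θ) ^ (ρ - 1) * (θ - s) ^ (ρ - 1) * v s :=
        mul_le_mul_of_nonneg_right hkernel (hv s hs)
    _ = _ := mul_assoc _ _ _

theorem integral_sub_rpow_mul_le {θ τ M : ℝ} (hρ : 0 < ρ) (hθτ : θ ≤ τ)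
    (hv : ∀ s ∈ Ioo θ τ, v s ≤ M)
    (hint : IntervalIntegrable (fun s => (τ - s) ^ (ρ - 1) * v s) volume θ τ) :
    ∫ s in θ..τ, (τ - s) ^ (ρ - 1) * v s ≤ M * ((τ - θ) ^ ρ / ρ) := by
  have hr : -1 < ρ - 1 := by linarith
  calc ∫ s in θ..τ, (τ - s) ^ (ρ - 1) * v s ≤ ∫ s in θ..τ, M * (τ - s) ^ (ρ - 1) :=
        integral_mono_on_of_le_Ioo hθτ hint ((intervalIntegrable_sub_rpow hr τ θ τ).const_mul M)
          fun s hs => by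
            rw [mul_comm]
            exact mul_le_mul_of_nonneg_right (hv s hs) (rpow_nonneg (by linarith [hs.2]) _)
    _ = M * ((τ - θ) ^ ρ / ρ) := by
        rw [intervalIntegral.integral_const_mul, integral_sub_rpow hr, sub_add_cancel]

theorem exists_pos_le_and_rpow_le {a ε : ℝ} (hρ : 0 < ρ) (ha : 0 < a) (hε : 0 < ε) :
    ∃ δ, 0 < δ ∧ δ ≤ a ∧ δ ^ ρ ≤ ε := by
  refine ⟨min a (ε ^ (1 / ρ)), lt_min ha (by positivity), min_le_left _ _, ?_⟩
  calc min a (ε ^ (1 / ρ)) ^ ρ ≤ (ε ^ (1 / ρ)) ^ ρ :=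
        rpow_le_rpow (lt_min ha (by positivity)).le (min_le_right _ _) hρ.le
    _ = ε := by rw [← rpow_mul hε.le, one_div_mul_cancel hρ.ne', rpow_one]

theorem pos_of_volterra_of_pos_on_Ioo {τ : ℝ} (hρ : 0 < ρ) (hρ1 : ρ ≤ 1)
    (hv : ContinuousOn v (Ioi 0))
    (hint : ∀ t > 0, IntervalIntegrable (fun s => (t - s) ^ (ρ - 1) * v s) volume 0 t)
    (heq : ∀ t > 0, ∫ s in 0..t, (t - s) ^ (ρ - 1) * v s = t ^ (ρ - 1) - Gamma ρ * v t)
    (hτ : 0 < τ) (hpos : ∀ s ∈ Ioo 0 τ, 0 < v s) : 0 < v τ := by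
  by_contra! hvτ
  have hΓ := Gamma_pos_of_pos hρ
  -- `δ ≤ τ / 2` keeps `τ / θ ≤ 2`, and `δ ^ ρ ≤ ρ Γ(ρ) / 4` makes `[θ, τ]` contribute little
  obtain ⟨δ, hδ, hδτ, hδρ⟩ :=
    exists_pos_le_and_rpow_le hρ (by linarith : 0 < τ / 2) (by positivity : 0 < ρ * Gamma ρ / 4)
  obtain ⟨θ, ⟨hθ₁, hθ₂⟩, hθmax⟩ := isCompact_Icc.exists_isMaxOn
    (nonempty_Icc.2 (by linarith : τ - δ ≤ τ))
    (hv.mono fun s hs => show 0 < s by linarith [hs.1])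
  have hM : 0 < v θ :=
    (hpos (τ - δ) ⟨by linarith, by linarith⟩).trans_le (hθmax ⟨le_rfl, by linarith⟩)
  have hθτ : θ < τ := lt_of_le_of_ne hθ₂ (by rintro rfl; linarith)
  have hθ : 0 < θ := by linarith
  have hsub : ∀ {a b}, 0 ≤ a → a ≤ b → b ≤ τ →
      IntervalIntegrable (fun s => (τ - s) ^ (ρ - 1) * v s) volume a b := fun ha hab hb =>
    (hint τ hτ).mono_set (uIcc_subset_uIcc (by rw [uIcc_of_le hτ.le]; exact ⟨ha, hab.trans hb⟩)
      (by rw [uIcc_of_le hτ.le]; exact ⟨ha.trans hab, hb⟩))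
  have hleft : ∫ s in 0..θ, (τ - s) ^ (ρ - 1) * v s ≤
      τ ^ (ρ - 1) - (τ / θ) ^ (ρ - 1) * Gamma ρ * v θ := by
    calc _ ≤ (τ / θ) ^ (ρ - 1) * ∫ s in 0..θ, (θ - s) ^ (ρ - 1) * v s :=
          integral_sub_rpow_mul_le_div_rpow_mul hρ1 hθ hθτ.le
            (fun s hs => (hpos s ⟨hs.1, hs.2.trans hθτ⟩).le) (hsub le_rfl hθ.le hθτ.le) (hint θ hθ)
      _ = _ := by
          rw [heq θ hθ, mul_sub, ← mul_rpow (by positivity) hθ.le, div_mul_cancel₀ _ hθ.ne']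
          ring
  have hright : ∫ s in θ..τ, (τ - s) ^ (ρ - 1) * v s ≤ v θ * ((τ - θ) ^ ρ / ρ) :=
    integral_sub_rpow_mul_le hρ hθτ.le (fun s hs => hθmax ⟨by linarith [hs.1], hs.2.le⟩)
      (hsub hθ.le hθτ.le le_rfl)
  have hsplit := integral_add_adjacent_intervals (hsub le_rfl hθ.le hθτ.le)
    (hsub hθ.le hθτ.le le_rfl)
  rw [heq τ hτ] at hsplit
  have hscale : 1 / 2 ≤ (τ / θ) ^ (ρ - 1) := by
    calc 1 / 2 ≤ (τ / θ) ^ (-1 : ℝ) := by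
          rw [rpow_neg_one, inv_div, le_div_iff₀ hτ]; linarith
      _ ≤ (τ / θ) ^ (ρ - 1) :=
          rpow_le_rpow_of_exponent_le ((one_le_div hθ).2 hθτ.le) (by linarith)
  have hshort : (τ - θ) ^ ρ / ρ ≤ Gamma ρ / 4 := by
    rw [div_le_iff₀ hρ]
    calc (τ - θ) ^ ρ ≤ δ ^ ρ := rpow_le_rpow (by linarith) (by linarith) hρ.le
      _ ≤ Gamma ρ / 4 * ρ := by linarith
  linarith [mul_le_mul_of_nonneg_right hscale (mul_pos hΓ hM).le,
    mul_le_mul_of_nonneg_left hshort hM.le, mul_nonpos_of_nonneg_of_nonpos hΓ.le hvτ,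
    mul_pos hΓ hM]

end AbelComparison

section Positivity

variable {ρ : ℝ}

theorem mittagLeffler₂_neg_rpow_pos (hρ : 0 < ρ) (hρ1 : ρ ≤ 1) {t : ℝ} (ht : 0 < t) :
    0 < mittagLeffler₂ ρ ρ (-t ^ ρ) := by
  set f := fun t : ℝ => mittagLeffler₂ ρ ρ (-t ^ ρ)
  have hf : Continuous f :=
    (continuous_mittagLeffler₂ hρ hρ1 hρ).comp (continuous_rpow_const hρ.le).neg
  have hf0 : 0 < f 0 := by
    simpa [f, zero_rpow hρ.ne'] using mittagLeffler₂_pos_of_nonneg hρ hρ1 hρ le_rfl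
  by_contra! hft
  obtain ⟨τ, ⟨⟨hτ0, hτt⟩, hfτ⟩, hleast⟩ :=
    (isCompact_Icc.inter_right (isClosed_le hf continuous_const)).exists_isLeast
      ⟨t, ⟨ht.le, le_rfl⟩, hft⟩
  have hτ : 0 < τ := lt_of_le_of_ne hτ0 (by rintro rfl; exact hf0.not_ge hfτ)
  have hvτ : 0 < τ ^ (ρ - 1) * f τ := by
    refine pos_of_volterra_of_pos_on_Ioo (v := fun s => s ^ (ρ - 1) * f s) hρ hρ1
      (fun s hs => ((continuousAt_id.rpow_const (Or.inl (ne_of_gt hs))).mul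
        hf.continuousAt).continuousWithinAt)
      (fun t ht => ?_) (fun t ht => integral_sub_rpow_mul_mittagLeffler₂ hρ hρ1 ht) hτ
      fun s hs => mul_pos (rpow_pos_of_pos hs.1 _)
        (lt_of_not_ge fun h => (hleast ⟨⟨hs.1.le, by linarith [hs.2]⟩, h⟩).not_gt hs.2)
    convert (intervalIntegrable_rpow_mul_sub_rpow hρ hρ ht).mul_continuousOn hf.continuousOn
      using 1
    ext s
    ring
  exact hfτ.not_gt (pos_of_mul_pos_right hvτ (rpow_nonneg hτ.le _))

theorem mittagLeffler₂_self_pos (hρ : 0 < ρ) (hρ1 : ρ ≤ 1) (x : ℝ) :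
    0 < mittagLeffler₂ ρ ρ x := by
  rcases le_or_gt 0 x with hx | hx
  · exact mittagLeffler₂_pos_of_nonneg hρ hρ1 hρ hx
  · have := mittagLeffler₂_neg_rpow_pos hρ hρ1 (rpow_pos_of_pos (neg_pos.2 hx) (1 / ρ))
    rwa [← rpow_mul (neg_pos.2 hx).le, one_div_mul_cancel hρ.ne', rpow_one, neg_neg] at this

end Positivity

theorem hasDerivAt_mittagLeffler {ρ : ℝ} (hρ : 0 < ρ) (hρ1 : ρ ≤ 1) (x : ℝ) :
    HasDerivAt (mittagLeffler ρ) (mittagLeffler₂ ρ ρ x / ρ) x := by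
  have hcoeff : ∀ k : ℕ, ((k + 1 : ℕ) : ℝ) * x ^ (k + 1 - 1) / Gamma (ρ * (k + 1 : ℕ) + 1) =
      x ^ k / Gamma (ρ * k + ρ) / ρ := by
    intro k
    have := (Gamma_pos_of_pos (by positivity : 0 < ρ * k + ρ)).ne'
    rw [show ρ * ((k + 1 : ℕ) : ℝ) + 1 = (ρ * k + ρ) + 1 by push_cast; ring,
      Gamma_add_one (by positivity), Nat.add_sub_cancel]
    field_simp
    push_cast
    ring
  have h := hasDerivAt_mittagLeffler₂ hρ hρ1 one_pos x
  rw [tsum_eq_zero_add' (((summable_pow_div_Gamma hρ hρ1 hρ x).div_const ρ).congr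
    fun k => (hcoeff k).symm), tsum_congr hcoeff, tsum_div_const] at h
  simp only [Nat.cast_zero, zero_mul, zero_div, zero_add] at h
  exact h

theorem strictMono_mittagLeffler {ρ : ℝ} (hρ : 0 < ρ) (hρ1 : ρ ≤ 1) :
    StrictMono (mittagLeffler ρ) :=
  strictMono_of_deriv_pos fun x => by
    rw [(hasDerivAt_mittagLeffler hρ hρ1 x).deriv]
    exact div_pos (mittagLeffler₂_self_pos hρ hρ1 x) hρ

theorem stmt11_general (ρ σ₀ t₀ lam₁ : ℝ) (hρ : 0 < ρ) (hρ' : ρ < 1) (hσ₀ : 0 < σ₀)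
    (ht₀ : 1 < t₀) (hlam₁ : 1 < lam₁) :
    ∀ σ ∈ Set.Ico σ₀ 1,
      mittagLeffler ρ (-(lam₁ * t₀ ^ ρ)) < mittagLeffler ρ (-(lam₁ ^ σ * t₀ ^ ρ)) ∧
      mittagLeffler ρ (-(lam₁ ^ σ * t₀ ^ ρ)) < mittagLeffler ρ (-(t₀ ^ ρ)) := by
  intro σ ⟨hσ₀σ, hσ1⟩
  have hE := strictMono_mittagLeffler hρ hρ'.le
  have ht₀ρ : 0 < t₀ ^ ρ := rpow_pos_of_pos (by linarith) ρ
  have hlow : 1 < lam₁ ^ σ := one_lt_rpow hlam₁ (hσ₀.trans_le hσ₀σ)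
  have hhigh : lam₁ ^ σ < lam₁ := by
    simpa using rpow_lt_rpow_of_exponent_lt hlam₁ hσ1
  exact ⟨hE (neg_lt_neg (mul_lt_mul_of_pos_right hhigh ht₀ρ)),
    hE (neg_lt_neg (lt_mul_of_one_lt_left ht₀ρ hlow))⟩

/-- For `ρ ∈ (0,1)`, `σ₀ ∈ (0,1)`, `t₀ > 1` and `λ₁ > 1` with `λ₁^{σ₀} ≥ 5Γ(1−ρ)`, for
every `σ ∈ [σ₀, 1)` one has `E_ρ(−λ₁ t₀^ρ) < E_ρ(−λ₁^σ t₀^ρ) < E_ρ(−t₀^ρ)`. -/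
theorem stmt11 (ρ σ₀ t₀ lam₁ : ℝ) (hρ : 0 < ρ) (hρ' : ρ < 1) (hσ₀ : 0 < σ₀) (hσ₀' : σ₀ < 1)
    (ht₀ : 1 < t₀) (hlam₁ : 1 < lam₁) (h : 5 * Real.Gamma (1 - ρ) ≤ lam₁ ^ σ₀) :
    ∀ σ ∈ Set.Ico σ₀ 1,
      mittagLeffler ρ (-(lam₁ * t₀ ^ ρ)) < mittagLeffler ρ (-(lam₁ ^ σ * t₀ ^ ρ)) ∧
      mittagLeffler ρ (-(lam₁ ^ σ * t₀ ^ ρ)) < mittagLeffler ρ (-(t₀ ^ ρ)) :=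
  stmt11_general ρ σ₀ t₀ lam₁ hρ hρ' hσ₀ ht₀ hlam₁
end
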